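/- Let m ≥ 1, let P : ℤ → Matrix (Fin 2m) (Fin 2m) ℂ with P(n) Hermitian for all n, and let x, y : ℤ → ℂ^{2m}, written x(n) = (u_x(n), v_x(n)) and y(n) = (u_y(n), v_y(n)) with components in ℂ^m. Define l(z)(n) = J·Δz(n) − P(n)·R(z)(n), where Δz(n) = z(n+1) − z(n), R(z)(n) = (u_z(n+1), v_z(n)), and J = [[0, −I_m], [I_m, 0]]. Then for all integers s ≤ k: Σ_{n=s}^{k} ( R(y)(n)* · l(x)(n) − (l(y)(n))* · R(x)(n) ) = y(k+1)* J x(k+1) − y(s)* J x(s). -/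

import Mathlib

/-!
Pointwise, the summand equals `ω(y(n+1), x(n+1)) - ω(y(n), x(n))` for the skew form
`ω(w, z) = w* J z`: the `P`-terms cancel because `P(n)` is Hermitian, and the `J`-terms form a
discrete product rule for `ω`, since `J` only pairs `u`-components with `v`-components, which is
exactly how `R` staggers the shift. The sum then telescopes.
-/

open Matrix

/-- The standard `2m × 2m` symplectic matrix `J = [[0, -I], [I, 0]]`. -/
noncomputable def symplJ (m : ℕ) : Matrix (Fin m ⊕ Fin m) (Fin m ⊕ Fin m) ℂ :=
  fromBlocks 0 (-1) 1 0

/-- The partial right shift operator `R(z)(n) = (u_z(n+1), v_z(n))` for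
`z(n) = (u_z(n), v_z(n))`. -/
def pShift {m : ℕ} (z : ℤ → (Fin m ⊕ Fin m) → ℂ) (n : ℤ) : (Fin m ⊕ Fin m) → ℂ :=
  Sum.elim (fun i => z (n + 1) (Sum.inl i)) (fun i => z n (Sum.inr i))

/-- The discrete Hamiltonian expression `l(z)(n) = J·Δz(n) − P(n)·R(z)(n)`. -/
noncomputable def discrL {m : ℕ} (P : ℤ → Matrix (Fin m ⊕ Fin m) (Fin m ⊕ Fin m) ℂ)
    (z : ℤ → (Fin m ⊕ Fin m) → ℂ) (n : ℤ) : (Fin m ⊕ Fin m) → ℂ :=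
  (symplJ m).mulVec (z (n + 1) - z n) - (P n).mulVec (pShift z n)

theorem Finset.sum_Icc_int_sub {M : Type*} [AddCommGroup M] (f : ℤ → M) {s k : ℤ}
    (h : s ≤ k + 1) : ∑ n ∈ Finset.Icc s k, (f (n + 1) - f n) = f (k + 1) - f s := by
  induction k, (show s - 1 ≤ k by omega) using Int.leInduction with
  | base => simp
  | succ k hk ih =>
    rw [← Finset.insert_Icc_right_eq_Icc_add_one (by omega),
      Finset.sum_insert (by simp), ih (by omega)]
    abel

theorem Matrix.star_mulVec_dotProduct {m n R : Type*} [Fintype m] [Fintype n]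
    [NonUnitalSemiring R] [StarRing R] (A : Matrix m n R) (w : n → R) (v : m → R) :
    star (A *ᵥ w) ⬝ᵥ v = star w ⬝ᵥ (Aᴴ *ᵥ v) := by
  rw [star_mulVec, dotProduct_mulVec]

theorem symplJ_conjTranspose (m : ℕ) : (symplJ m)ᴴ = -symplJ m := by
  simp [symplJ, fromBlocks_conjTranspose, fromBlocks_neg]

theorem star_dotProduct_symplJ_mulVec {m : ℕ} (w z : Fin m ⊕ Fin m → ℂ) :
    star w ⬝ᵥ (symplJ m *ᵥ z) =
      star (w ∘ Sum.inr) ⬝ᵥ (z ∘ Sum.inl) - star (w ∘ Sum.inl) ⬝ᵥ (z ∘ Sum.inr) := by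
  simp [symplJ, fromBlocks_mulVec, neg_mulVec, dotProduct, Fintype.sum_sum_type, sub_eq_add_neg,
    add_comm]

theorem pShift_comp_inl {m : ℕ} (z : ℤ → Fin m ⊕ Fin m → ℂ) (n : ℤ) :
    pShift z n ∘ Sum.inl = z (n + 1) ∘ Sum.inl := rfl

theorem pShift_comp_inr {m : ℕ} (z : ℤ → Fin m ⊕ Fin m → ℂ) (n : ℤ) :
    pShift z n ∘ Sum.inr = z n ∘ Sum.inr := rfl

theorem symplJ_form_sub {m : ℕ} (x y : ℤ → Fin m ⊕ Fin m → ℂ) (n : ℤ) :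
    star (pShift y n) ⬝ᵥ (symplJ m *ᵥ (x (n + 1) - x n))
      + star (y (n + 1) - y n) ⬝ᵥ (symplJ m *ᵥ pShift x n) =
    star (y (n + 1)) ⬝ᵥ (symplJ m *ᵥ x (n + 1)) - star (y n) ⬝ᵥ (symplJ m *ᵥ x n) := by
  simp only [star_dotProduct_symplJ_mulVec, pShift_comp_inl, pShift_comp_inr, Pi.sub_comp,
    star_sub, sub_dotProduct, dotProduct_sub]
  abel

theorem lagrange_identity_pointwise {m : ℕ}
    (P : ℤ → Matrix (Fin m ⊕ Fin m) (Fin m ⊕ Fin m) ℂ) (hP : ∀ n, (P n).IsHermitian)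
    (x y : ℤ → Fin m ⊕ Fin m → ℂ) (n : ℤ) :
    star (pShift y n) ⬝ᵥ discrL P x n - star (discrL P y n) ⬝ᵥ pShift x n =
      star (y (n + 1)) ⬝ᵥ (symplJ m *ᵥ x (n + 1)) - star (y n) ⬝ᵥ (symplJ m *ᵥ x n) := by
  rw [← symplJ_form_sub]
  simp only [discrL, star_sub, sub_dotProduct, dotProduct_sub, star_mulVec_dotProduct,
    (hP n).eq, symplJ_conjTranspose, neg_mulVec, dotProduct_neg]
  abel

theorem stmt_13_general (m : ℕ)
    (P : ℤ → Matrix (Fin m ⊕ Fin m) (Fin m ⊕ Fin m) ℂ)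
    (hP : ∀ n : ℤ, (P n).IsHermitian)
    (x y : ℤ → (Fin m ⊕ Fin m) → ℂ) (s k : ℤ) (hsk : s ≤ k) :
    (∑ n ∈ Finset.Icc s k,
        (dotProduct (star (pShift y n)) (discrL P x n) -
          dotProduct (star (discrL P y n)) (pShift x n))) =
      dotProduct (star (y (k + 1))) ((symplJ m).mulVec (x (k + 1))) -
        dotProduct (star (y s)) ((symplJ m).mulVec (x s)) := by
  simp only [lagrange_identity_pointwise P hP x y]
  exact Finset.sum_Icc_int_sub (fun n => star (y n) ⬝ᵥ (symplJ m *ᵥ x n)) (by omega)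

/-- the discrete Lagrange identity: for `P(n)` Hermitian and all `s ≤ k`,
`Σ_{n=s}^{k} (R(y)(n)* l(x)(n) − (l(y)(n))* R(x)(n))
  = y(k+1)* J x(k+1) − y(s)* J x(s)`. -/
theorem stmt_13 (m : ℕ) (hm : 1 ≤ m)
    (P : ℤ → Matrix (Fin m ⊕ Fin m) (Fin m ⊕ Fin m) ℂ)
    (hP : ∀ n : ℤ, (P n).IsHermitian)
    (x y : ℤ → (Fin m ⊕ Fin m) → ℂ) (s k : ℤ) (hsk : s ≤ k) :
    (∑ n ∈ Finset.Icc s k,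
        (dotProduct (star (pShift y n)) (discrL P x n) -
          dotProduct (star (discrL P y n)) (pShift x n))) =
      dotProduct (star (y (k + 1))) ((symplJ m).mulVec (x (k + 1))) -
        dotProduct (star (y s)) ((symplJ m).mulVec (x s)) :=
  stmt_13_general m P hP x y s k hsk
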